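/- Suppose I is an open interval of real numbers and φ ∈ Homeo⁺(I) is such that the set of fixed points of φ has Lebesgue measure zero. Then for every nonempty set S there exists a good S-predictor on I that is anonymous with respect to the cyclic group ⟨φ⟩ generated by φ. -/

import Mathlib

/-!
Fix well-orders of `α → S` and of `S`. Given `F` and `t`, let `G` be the least total function
that agrees, below some translate `φⁿ t`, with the correspondingly translated `F`, and predict the
least of the values `G (φⁿ t)` over such `n`. This depends only on the `⟨φ⟩`-orbit of the germ of
`F` below `t`, so the predictor is anonymous. The candidate set shrinks as `t` increases, so `G`
increases with `t`; the points after which it increases strictly form a well-ordered, hence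
countable, subset of the line. At any other error `t`, the same `G` is chosen at some `t' > t`
and at a point `c` of a fixed countable dense set in between. Then one translate of `G` agrees
with `F` at `t`, while the predicting translate disagrees with it; for given `G` and pair of
translates this happens at most once, so there are only countably many errors.
-/

open MeasureTheory Set Function

section Countability

variable {β : Type*} [LinearOrder β] [TopologicalSpace β] [OrderTopology β]
  [SecondCountableTopology β]

theorem Set.IsWF.countable {s : Set β} (hs : s.IsWF) : s.Countable := by
  have hsucc : ∀ x ∈ {x ∈ s | (s ∩ Ioi x).Nonempty}, ∃ y, Minimal (· ∈ s ∩ Ioi x) y :=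
    fun x hx => (hs.subset inter_subset_left).exists_minimal hx.2
  choose! y hy using hsucc
  have hdisj : PairwiseDisjoint {x ∈ s | (s ∩ Ioi x).Nonempty} fun x => Ioo x (y x) := by
    intro a ha b hb hab
    wlog h : a < b generalizing a b
    · exact (this hb ha hab.symm (hab.lt_or_gt.resolve_left h)).symm
    have hyb : y a ≤ b := not_lt.1 ((hy a ha).not_lt ⟨hb.1, h⟩)
    exact disjoint_left.2 fun z hza hzb => (hza.2.trans_le hyb).not_gt hzb.1
  have hmax : {x ∈ s | ¬(s ∩ Ioi x).Nonempty}.Subsingleton := by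
    intro a ha b hb
    by_contra hab
    rcases lt_or_gt_of_ne hab with h | h
    · exact ha.2 ⟨b, hb.1, h⟩
    · exact hb.2 ⟨a, ha.1, h⟩
  refine ((hdisj.countable_of_Ioo fun x hx => (hy x hx).prop.2).union hmax.countable).mono ?_
  exact fun x hx => (em _).elim (fun h => Or.inl ⟨hx, h⟩) fun h => Or.inr ⟨hx, h⟩

theorem countable_setOf_forall_lt_imp_lt {γ : Type*} [Preorder γ] [WellFoundedLT γ]
    (f : β → γ) : {x | ∀ y, x < y → f x < f y}.Countable :=
  Set.IsWF.countable <| ((wellFoundedOn_univ.2 wellFounded_lt).mapsTo f (mapsTo_univ _ _)).mono'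
    fun _ ha b _ hab => ha b hab

end Countability

theorem Function.argminOn_congr {α β : Type*} [LT β] [WellFoundedLT β] (f : α → β)
    {s t : Set α} (h : s = t) (hs : s.Nonempty) (ht : t.Nonempty) :
    argminOn f s hs = argminOn f t ht := by
  subst h; rfl

theorem Int.exists_iff_exists_sub {p : ℤ → Prop} (k : ℤ) : (∃ n, p n) ↔ ∃ n, p (n - k) :=
  ⟨fun ⟨n, h⟩ => ⟨n + k, by rwa [add_sub_cancel_right]⟩, fun ⟨_, h⟩ => ⟨_, h⟩⟩

namespace Equiv.Perm

theorem zpow_apply_inv_zpow_apply {α : Type*} (f : Perm α) (n k : ℤ) (t : α) :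
    (f ^ n) ((f ^ k)⁻¹ t) = (f ^ (n - k)) t := by
  rw [zpow_sub, mul_apply]

variable {α : Type*} [LinearOrder α] {f : Perm α}

theorem strictMono_inv (hf : StrictMono f) : StrictMono ⇑f⁻¹ :=
  fun a b h => hf.lt_iff_lt.1 (by simpa using h)

theorem strictMono_zpow (hf : StrictMono f) (n : ℤ) : StrictMono ⇑(f ^ n) := by
  induction n using Int.induction_on with
  | zero => exact strictMono_id
  | succ k ih => rw [zpow_add_one, coe_mul]; exact ih.comp hf
  | pred k ih => rw [zpow_sub_one, coe_mul]; exact ih.comp (strictMono_inv hf)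

end Equiv.Perm

namespace AnonymousPredictor

open Equiv.Perm

variable {α S : Type*} [LinearOrder α] (φ : Equiv.Perm α)

def MatchesAt (F : α → S) (t : α) (n : ℤ) (G : α → S) : Prop :=
  EqOn G (F ∘ ⇑(φ ^ n)⁻¹) (Iio ((φ ^ n) t))

def germOrbit (F : α → S) (t : α) : Set (α → S) :=
  {G | ∃ n, MatchesAt φ F t n G}

theorem mem_germOrbit_self (F : α → S) (t : α) : F ∈ germOrbit φ F t :=
  ⟨0, fun x _ => by simp⟩

-- `embeddingToCardinal` pulls back the well-order of `Cardinal`.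
noncomputable def germRep (F : α → S) (t : α) : α → S :=
  argminOn embeddingToCardinal (germOrbit φ F t) ⟨F, mem_germOrbit_self φ F t⟩

theorem germRep_mem (F : α → S) (t : α) : germRep φ F t ∈ germOrbit φ F t :=
  argminOn_mem _ _ _

def predictionSet (F : α → S) (t : α) : Set S :=
  (fun n => germRep φ F t ((φ ^ n) t)) '' {n | MatchesAt φ F t n (germRep φ F t)}

theorem predictionSet_nonempty (F : α → S) (t : α) : (predictionSet φ F t).Nonempty :=
  let ⟨n, hn⟩ := germRep_mem φ F t
  ⟨_, n, hn, rfl⟩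

noncomputable def predictor (F : α → S) (t : α) : S :=
  argminOn embeddingToCardinal (predictionSet φ F t) (predictionSet_nonempty φ F t)

theorem predictor_mem (F : α → S) (t : α) : predictor φ F t ∈ predictionSet φ F t :=
  argminOn_mem _ _ _

theorem matchesAt_translate_iff (F G : α → S) (t : α) (n k : ℤ) :
    MatchesAt φ (F ∘ ⇑(φ ^ k)) ((φ ^ k)⁻¹ t) n G ↔ MatchesAt φ F t (n - k) G := by
  have hinv : (φ ^ (n - k))⁻¹ = φ ^ k * (φ ^ n)⁻¹ := by rw [zpow_sub, mul_inv_rev, inv_inv]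
  simp only [MatchesAt, zpow_apply_inv_zpow_apply, hinv, coe_mul, comp_assoc]

theorem germOrbit_translate (F : α → S) (t : α) (k : ℤ) :
    germOrbit φ (F ∘ ⇑(φ ^ k)) ((φ ^ k)⁻¹ t) = germOrbit φ F t := by
  ext G
  simp only [germOrbit, mem_ofPred_eq, matchesAt_translate_iff]
  conv_rhs => rw [Int.exists_iff_exists_sub k]

theorem germRep_translate (F : α → S) (t : α) (k : ℤ) :
    germRep φ (F ∘ ⇑(φ ^ k)) ((φ ^ k)⁻¹ t) = germRep φ F t :=
  argminOn_congr _ (germOrbit_translate φ F t k) _ _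

theorem predictionSet_translate (F : α → S) (t : α) (k : ℤ) :
    predictionSet φ (F ∘ ⇑(φ ^ k)) ((φ ^ k)⁻¹ t) = predictionSet φ F t := by
  ext s
  simp only [predictionSet, mem_image, mem_ofPred_eq, germRep_translate, matchesAt_translate_iff,
    zpow_apply_inv_zpow_apply]
  conv_rhs => rw [Int.exists_iff_exists_sub k]

theorem predictor_translate (F : α → S) (t : α) (k : ℤ) :
    predictor φ (F ∘ ⇑(φ ^ k)) ((φ ^ k)⁻¹ t) = predictor φ F t :=
  argminOn_congr _ (predictionSet_translate φ F t k) _ _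

variable {φ} (hφ : StrictMono φ)
include hφ

theorem matchesAt_congr {F F' : α → S} {t : α} (hF : EqOn F F' (Iio t)) (n : ℤ) (G : α → S) :
    MatchesAt φ F t n G ↔ MatchesAt φ F' t n G := by
  have hlt : ∀ x ∈ Iio ((φ ^ n) t), (φ ^ n)⁻¹ x ∈ Iio t := fun x hx => by
    simpa using strictMono_inv (strictMono_zpow hφ n) hx
  exact ⟨fun h x hx => (h hx).trans (hF (hlt x hx)),
    fun h x hx => (h hx).trans (hF (hlt x hx)).symm⟩

theorem MatchesAt.mono {F G : α → S} {t t' : α} {n : ℤ} (h : MatchesAt φ F t' n G)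
    (htt' : t ≤ t') : MatchesAt φ F t n G :=
  EqOn.mono (Iio_subset_Iio ((strictMono_zpow hφ n).monotone htt')) h

theorem MatchesAt.apply_eq {F G : α → S} {t t' : α} {n : ℤ} (h : MatchesAt φ F t' n G)
    (htt' : t < t') : G ((φ ^ n) t) = F t := by
  simpa using h (strictMono_zpow hφ n htt')

theorem germOrbit_congr {F F' : α → S} {t : α} (hF : EqOn F F' (Iio t)) :
    germOrbit φ F t = germOrbit φ F' t := by
  simp only [germOrbit, matchesAt_congr hφ hF]

theorem germRep_congr {F F' : α → S} {t : α} (hF : EqOn F F' (Iio t)) :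
    germRep φ F t = germRep φ F' t :=
  argminOn_congr _ (germOrbit_congr hφ hF) _ _

theorem predictionSet_congr {F F' : α → S} {t : α} (hF : EqOn F F' (Iio t)) :
    predictionSet φ F t = predictionSet φ F' t := by
  simp only [predictionSet, germRep_congr hφ hF, matchesAt_congr hφ hF]

theorem predictor_congr {F F' : α → S} {t : α} (hF : EqOn F F' (Iio t)) :
    predictor φ F t = predictor φ F' t :=
  argminOn_congr _ (predictionSet_congr hφ hF) _ _

theorem germOrbit_anti (F : α → S) : Antitone (germOrbit φ F) :=
  fun _ _ htt' _ ⟨n, hn⟩ => ⟨n, hn.mono hφ htt'⟩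

theorem monotone_germRep (F : α → S) : Monotone fun t => embeddingToCardinal (germRep φ F t) :=
  fun _ t' htt' => argminOn_le _ _ (germOrbit_anti hφ F htt' (germRep_mem φ F t'))

theorem subsingleton_setOf_matchesAt_ne (F G : α → S) (m n : ℤ) :
    {t | MatchesAt φ F t m G ∧ MatchesAt φ F t n G ∧ G ((φ ^ m) t) ≠ G ((φ ^ n) t)}
      |>.Subsingleton := by
  have agree : ∀ ⦃t t'⦄, MatchesAt φ F t' m G ∧ MatchesAt φ F t' n G → t < t' →
      G ((φ ^ m) t) = G ((φ ^ n) t) :=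
    fun _ _ h htt' => (h.1.apply_eq hφ htt').trans (h.2.apply_eq hφ htt').symm
  intro t ht t' ht'
  exact le_antisymm (not_lt.1 fun h => ht'.2.2 (agree ⟨ht.1, ht.2.1⟩ h))
    (not_lt.1 fun h => ht.2.2 (agree ⟨ht'.1, ht'.2.1⟩ h))

theorem countable_setOf_predictor_ne [TopologicalSpace α] [OrderTopology α]
    [SecondCountableTopology α] [DenselyOrdered α] (F : α → S) :
    {t | predictor φ F t ≠ F t}.Countable := by
  obtain ⟨C, hC, hCdense⟩ := TopologicalSpace.exists_countable_dense α
  set rank := fun t => embeddingToCardinal (germRep φ F t)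
  refine ((countable_setOf_forall_lt_imp_lt rank).union (hC.biUnion fun c _ =>
    countable_iUnion fun m => countable_iUnion fun n =>
      (subsingleton_setOf_matchesAt_ne hφ F (germRep φ F c) m n).countable)).mono ?_
  intro t ht
  by_cases hjump : ∀ t', t < t' → rank t < rank t'
  · exact Or.inl hjump
  push Not at hjump
  obtain ⟨t', htt', hle⟩ := hjump
  obtain ⟨c, hcC, htc, hct'⟩ := hCdense.exists_between htt'
  have hrank := monotone_germRep hφ F
  have hc : germRep φ F c = germRep φ F t :=
    embeddingToCardinal.injective <| le_antisymm ((hrank hct'.le).trans hle) (hrank htc.le)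
  have ht' : germRep φ F t' = germRep φ F t :=
    embeddingToCardinal.injective <| le_antisymm hle (hrank htt'.le)
  obtain ⟨m, hm⟩ := germRep_mem φ F t'
  obtain ⟨n, hn, hval⟩ := predictor_mem φ F t
  rw [ht'] at hm
  refine Or.inr (mem_biUnion hcC (mem_iUnion.2 ⟨m, mem_iUnion.2 ⟨n, ?_⟩⟩))
  rw [hc]
  refine ⟨hm.mono hφ htt'.le, hn, ?_⟩
  rw [hm.apply_eq hφ htt']
  exact fun h => ht (hval.symm.trans h.symm)

end AnonymousPredictor

theorem stmt_5_general (I : Set ℝ) (hIconn : I.OrdConnected)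
    (φ : Equiv.Perm I) (hmono : StrictMono (⇑φ))
    (S : Type*) :
    ∃ P : I → (I → S) → S,
      (∀ (t : I) (F G : I → S), (∀ x : I, x < t → F x = G x) → P t F = P t G) ∧
      (∀ F : I → S,
        volume {t : ℝ | ∃ ht : t ∈ I, P ⟨t, ht⟩ F ≠ F ⟨t, ht⟩} = 0) ∧
      (∀ (n : ℤ) (t : I) (F : I → S), P t F = P ((φ ^ n)⁻¹ t) (F ∘ ⇑(φ ^ n))) := by
  refine ⟨fun t F => AnonymousPredictor.predictor φ F t,
    fun t F G h => AnonymousPredictor.predictor_congr hmono h, fun F => ?_,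
    fun n t F => (AnonymousPredictor.predictor_translate φ F t n).symm⟩
  have hcount := AnonymousPredictor.countable_setOf_predictor_ne hmono F
  refine measure_mono_null ?_ ((hcount.image Subtype.val).measure_zero _)
  rintro x ⟨hx, h⟩
  exact ⟨⟨x, hx⟩, h, rfl⟩

/-- If `I` is an open interval of reals (open, order-connected, nonempty subset of `ℝ`) and
`φ ∈ Homeo⁺(I)` (modelled as a strictly monotone permutation of `I`) has a fixed point set
of Lebesgue measure zero, then for every (nonempty) set `S` there is a good `S`-predictor
on `I` that is anonymous with respect to the cyclic group `⟨φ⟩ = {φ^n : n ∈ ℤ}`.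
A predictor is encoded as `P : I → (I → S) → S`, where `P t F` is the prediction from `F`
restricted to `{x ∈ I : x < t}` (so `P t` depends only on those values). -/
theorem stmt_5 (I : Set ℝ) (hIopen : IsOpen I) (hIconn : I.OrdConnected) (hIne : I.Nonempty)
    (φ : Equiv.Perm I) (hmono : StrictMono (⇑φ))
    (hfixnull : volume {x : ℝ | ∃ hx : x ∈ I, φ ⟨x, hx⟩ = ⟨x, hx⟩} = 0)
    (S : Type*) [Nonempty S] :
    ∃ P : I → (I → S) → S,
      (∀ (t : I) (F G : I → S), (∀ x : I, x < t → F x = G x) → P t F = P t G) ∧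
      (∀ F : I → S,
        volume {t : ℝ | ∃ ht : t ∈ I, P ⟨t, ht⟩ F ≠ F ⟨t, ht⟩} = 0) ∧
      (∀ (n : ℤ) (t : I) (F : I → S), P t F = P ((φ ^ n)⁻¹ t) (F ∘ ⇑(φ ^ n))) :=
  stmt_5_general I hIconn φ hmono S
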